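/- (Nemhauser–Wolsey–Fisher) Let f : 2^U → ℝ≥0 be a normalized, monotone, submodular function on a finite ground set U, and let k ≥ 1. Let G_k be the set produced by the greedy algorithm that iteratively adds the element of largest marginal gain for k steps. Then f(G_k) ≥ (1 − (1 − 1/k)^k) · max_{|S| ≤ k} f(S) ≥ (1 − e^{−1}) · max_{|S| ≤ k} f(S). -/
import Mathlib


open Finset

/-- Nemhauser–Wolsey–Fisher: for a normalized, monotone, submodular
nonnegative set function `f` and a greedy sequence `G` of sets (each step
adding an element of largest marginal gain), the greedy set after `k` steps
achieves a `(1 − (1 − 1/k)^k) ≥ (1 − e⁻¹)` fraction of the optimum over all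
sets of cardinality at most `k`. -/
theorem nemhauser_wolsey_fisher {U : Type*} [Fintype U] [DecidableEq U]
    (f : Finset U → ℝ)
    (hnonneg : ∀ A, 0 ≤ f A)
    (hnorm : f ∅ = 0)
    (hmono : ∀ A B : Finset U, A ⊆ B → f A ≤ f B)
    (hsub : ∀ A B : Finset U, ∀ u : U, A ⊆ B → u ∉ B →
      f (insert u B) - f B ≤ f (insert u A) - f A)
    (k : ℕ) (hk : 1 ≤ k)
    (G : ℕ → Finset U) (g : ℕ → U)
    (hG0 : G 0 = ∅)
    (hGstep : ∀ i, G (i + 1) = insert (g i) (G i))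
    (hgreedy : ∀ i, ∀ u : U,
      f (insert u (G i)) - f (G i) ≤ f (insert (g i) (G i)) - f (G i)) :
    ∀ S : Finset U, S.card ≤ k →
      (1 - (1 - 1 / (k : ℝ)) ^ k) * f S ≤ f (G k) ∧
      (1 - Real.exp (-1)) * f S ≤ (1 - (1 - 1 / (k : ℝ)) ^ k) * f S := by
  intro S hS
  have hkR : (1 : ℝ) ≤ (k : ℝ) := by exact_mod_cast hk
  have hkpos : (0 : ℝ) < (k : ℝ) := lt_of_lt_of_le one_pos hkR
  -- submodularity without the `u ∉ B` hypothesis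
  have hsub' : ∀ A B : Finset U, ∀ u : U, A ⊆ B →
      f (insert u B) - f B ≤ f (insert u A) - f A := by
    intro A B u hAB
    by_cases hu : u ∈ B
    · rw [Finset.insert_eq_self.mpr hu]
      have := hmono A (insert u A) (Finset.subset_insert u A)
      linarith
    · exact hsub A B u hAB hu
  -- telescoping bound
  have tele : ∀ T B : Finset U,
      f (B ∪ T) ≤ f B + ∑ u ∈ T, (f (insert u B) - f B) := by
    intro T
    induction T using Finset.induction_on with
    | empty => intro B; simp
    | @insert a T' ha ih =>
      intro B
      have h1 : B ∪ insert a T' = insert a (B ∪ T') := by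
        ext x; simp [or_comm, or_assoc, or_left_comm]
      have h2 : f (insert a (B ∪ T')) - f (B ∪ T') ≤ f (insert a B) - f B :=
        hsub' B (B ∪ T') a (Finset.subset_union_left)
      have h3 := ih B
      rw [h1, Finset.sum_insert ha]
      linarith
  -- each greedy gain is nonnegative
  have hgain : ∀ i, 0 ≤ f (G (i + 1)) - f (G i) := by
    intro i
    rw [hGstep i]
    have := hmono (G i) (insert (g i) (G i)) (Finset.subset_insert _ _)
    linarith
  -- key: f S - f (G i) ≤ k * (f (G (i+1)) - f (G i))
  have key : ∀ i, f S - f (G i) ≤ (k : ℝ) * (f (G (i + 1)) - f (G i)) := by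
    intro i
    have h1 : f S ≤ f (G i ∪ S) := hmono _ _ (Finset.subset_union_right)
    have h2 := tele S (G i)
    have h3 : ∑ u ∈ S, (f (insert u (G i)) - f (G i)) ≤
        ∑ _u ∈ S, (f (G (i + 1)) - f (G i)) := by
      apply Finset.sum_le_sum
      intro u _
      rw [hGstep i]; exact hgreedy i u
    rw [Finset.sum_const, nsmul_eq_mul] at h3
    have h4 : (S.card : ℝ) * (f (G (i + 1)) - f (G i)) ≤
        (k : ℝ) * (f (G (i + 1)) - f (G i)) := by
      apply mul_le_mul_of_nonneg_right _ (hgain i)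
      exact_mod_cast hS
    linarith
  -- deficit contraction
  have hc : (0 : ℝ) ≤ 1 - 1 / (k : ℝ) := by
    have : 1 / (k : ℝ) ≤ 1 := by
      rw [div_le_one hkpos]; exact hkR
    linarith
  have deficit : ∀ n, f S - f (G n) ≤ (1 - 1 / (k : ℝ)) ^ n * f S := by
    intro n
    induction n with
    | zero => simp [hG0, hnorm]
    | succ n ih =>
      have hstep : f S - f (G (n + 1)) ≤ (1 - 1 / (k : ℝ)) * (f S - f (G n)) := by
        have := key n
        have hΔ : (f S - f (G n)) / (k : ℝ) ≤ f (G (n + 1)) - f (G n) := by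
          rw [div_le_iff₀ hkpos]; linarith
        have : f S - f (G (n + 1)) ≤ (f S - f (G n)) - (f S - f (G n)) / (k : ℝ) := by
          linarith
        calc f S - f (G (n + 1)) ≤ (f S - f (G n)) - (f S - f (G n)) / (k : ℝ) := this
          _ = (1 - 1 / (k : ℝ)) * (f S - f (G n)) := by ring
      calc f S - f (G (n + 1)) ≤ (1 - 1 / (k : ℝ)) * (f S - f (G n)) := hstep
        _ ≤ (1 - 1 / (k : ℝ)) * ((1 - 1 / (k : ℝ)) ^ n * f S) :=
            mul_le_mul_of_nonneg_left ih hc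
        _ = (1 - 1 / (k : ℝ)) ^ (n + 1) * f S := by ring
  constructor
  · have := deficit k
    nlinarith [this]
  · -- (1 - 1/k)^k ≤ exp (-1)
    have h1 : 1 - 1 / (k : ℝ) ≤ Real.exp (-(1 / (k : ℝ))) := by
      have := Real.add_one_le_exp (-(1 / (k : ℝ)))
      linarith
    have h2 : (1 - 1 / (k : ℝ)) ^ k ≤ (Real.exp (-(1 / (k : ℝ)))) ^ k :=
      pow_le_pow_left₀ hc h1 k
    have h3 : (Real.exp (-(1 / (k : ℝ)))) ^ k = Real.exp ((k : ℝ) * (-(1 / (k : ℝ)))) := by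
      rw [← Real.exp_nat_mul]
    have h4 : (k : ℝ) * (-(1 / (k : ℝ))) = -1 := by
      field_simp
    have h5 : (1 - 1 / (k : ℝ)) ^ k ≤ Real.exp (-1) := by
      rw [h3, h4] at h2; exact h2
    have := hnonneg S
    nlinarith
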